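/- arXiv:2109.14877 — 3 statements merged into one kernel-verified Lean document; each statement's English description precedes it below -/
import Mathlib

section
/- Let T be a small countable complete first-order theory, let D be a finite subset and B = {b_1, b_2, ..., b_i, ...} a countable subset of a model of T. Then for each satisfiable (B ∪ D)-formula φ(x, b̄_n, d̄), where b̄_n = (b_1, ..., b_n) ∈ B (n < ω) and d̄ ∈ D, there exists a complete 1-type q_φ ∈ S_1(B ∪ D) such that (1) φ(x, b̄_n, d̄) ∈ q_φ, and (2) for every i ≥ n the restriction q_φ ↾ (B_i ∪ D) is principal, where B_i = {b_1, ..., b_i}. -/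
namespace Paper

open FirstOrder FirstOrder.Language Set

universe u v w x y

variable (L : FirstOrder.Language.{u, v})

/-- A theory is *small* if for every `n` it has only countably many complete `n`-types
over the empty set. -/
def IsSmall (T : L.Theory) : Prop := ∀ n : ℕ, Countable (T.CompleteType (Fin n))

section Basic

variable {M : Type w} [L.Structure M]

/-- `M` is ω-saturated: every set of 1-formulas over finitely many parameters that is
finitely satisfiable in `M` is realized in `M`. -/
def OmegaSaturated (M : Type w) [L.Structure M] : Prop :=
  ∀ (k : ℕ) (c : Fin k → M) (S : Set (L.Formula (Fin k ⊕ Fin 1))),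
    (∀ S₀ : Finset (L.Formula (Fin k ⊕ Fin 1)), ↑S₀ ⊆ S →
        ∃ a : M, ∀ φ ∈ S₀, Formula.Realize φ (Sum.elim c fun _ => a)) →
    ∃ a : M, ∀ φ ∈ S, Formula.Realize φ (Sum.elim c fun _ => a)

/-- The complete type of a tuple over the empty parameter set (as a set of formulas). -/
def tp0 {γ : Type*} (a : γ → M) : Set (L.Formula γ) := {φ | φ.Realize a}

/-- The complete type of a tuple `a` over the parameters `c`. -/
def tpT {β γ : Type*} (c : β → M) (a : γ → M) : Set (L.Formula (β ⊕ γ)) :=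
  {φ | φ.Realize (Sum.elim c a)}

/-- The complete 1-type of an element `a` over the parameters `c`. -/
def tp1 {β : Type*} (c : β → M) (a : M) : Set (L.Formula (β ⊕ Fin 1)) :=
  {φ | φ.Realize (Sum.elim c fun _ => a)}

/-- `tp(a/c)` is principal (isolated by a single formula). -/
def IsPrincipalT {β γ : Type*} (c : β → M) (a : γ → M) : Prop :=
  ∃ φ ∈ tpT L c a, ∀ a' : γ → M,
    Formula.Realize φ (Sum.elim c a') → tpT L c a' = tpT L c a

/-- The 1-type `tp(a/c)` is principal. -/
def IsPrincipal1 {β : Type*} (c : β → M) (a : M) : Prop :=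
  ∃ φ ∈ tp1 L c a, ∀ a' : M,
    Formula.Realize φ (Sum.elim c fun _ => a') → tp1 L c a' = tp1 L c a

/-- `g : B → N` is a partial elementary map (this is the meaning of "`B ⊆ N`" for a
subset `B` of another model). -/
def PartialElem {M : Type w} {N : Type x} [L.Structure M] [L.Structure N]
    (B : Set M) (g : B → N) : Prop :=
  ∀ (n : ℕ) (φ : L.Formula (Fin n)) (b : Fin n → B),
    Formula.Realize φ (fun i => (b i : M)) ↔ Formula.Realize φ (fun i => g (b i))

/-- The finite diagram of `M` is contained in the finite diagram of `N`: every complete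
type over `∅` realized in `M` is realized in `N`. -/
def FinDiagSubset (M : Type w) (N : Type x) [L.Structure M] [L.Structure N] : Prop :=
  ∀ (n : ℕ) (a : Fin n → M), ∃ b : Fin n → N, tp0 L a = tp0 L b

/-- The dowry of `B₁` is contained in the dowry of `B₂`. -/
def DowrySubset {M : Type w} [L.Structure M] (B₁ B₂ : Set M) : Prop :=
  ∀ (n : ℕ) (b₁ : Fin n → B₁), ∃ b₂ : Fin n → B₂,
    tp0 L (fun i => (b₁ i : M)) = tp0 L (fun i => (b₂ i : M))

/-- `A` (together with the identification `e` of `B` with a subset of `A`) is a model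
obtained by the construction of Theorem 2 over the countable set `B`: a countable model of
`T` containing `B` in which every finite tuple has a principal type over some finite tuple
from `B` extending any prescribed finite tuple from `B`. -/
def IsConstructedOver (T : L.Theory) {M : Type w} [L.Structure M] (B : Set M)
    (A : Type x) [L.Structure A] (e : B → A) : Prop :=
  Countable A ∧ T.Model A ∧ PartialElem L B e ∧
    ∀ (n : ℕ) (a : Fin n → A) (k₀ : ℕ) (b₀ : Fin k₀ → B),
      ∃ (k : ℕ) (b : Fin k → B), (∀ j, ∃ i, b i = b₀ j) ∧
        IsPrincipalT L (fun i => e (b i)) a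

/-- `N` is a homogeneous structure. -/
def IsHomogeneous (N : Type x) [L.Structure N] : Prop :=
  ∀ (n : ℕ) (a b : Fin n → N), tp0 L a = tp0 L b →
    ∀ c : N, ∃ d : N, tp0 L (Fin.snoc a c) = tp0 L (Fin.snoc b d)

/-- `p ⊥ʷ q`: weak orthogonality of the two types, witnessed inside the (sufficiently
saturated) structure `N`. -/
def WeaklyOrthogonalIn (N : Type x) [L.Structure N] {k m : ℕ}
    (p : Set (L.Formula (Fin k))) (q : Set (L.Formula (Fin m))) : Prop :=
  ∀ (a₁ a₂ : Fin k → N) (b₁ b₂ : Fin m → N),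
    tp0 L a₁ = p → tp0 L a₂ = p → tp0 L b₁ = q → tp0 L b₂ = q →
      tp0 L (Fin.append a₁ b₁) = tp0 L (Fin.append a₂ b₂)

end Basic

/-- `I(T, ℵ₀) = 2^{ℵ₀}`: the theory `T` has continuum many pairwise non-isomorphic
countable models. -/
def HasContinuumManyCountableModels (T : L.Theory) : Prop :=
  ∃ f : Set ℕ → Theory.ModelType.{u, v, max u v} T,
    (∀ s, Countable (f s)) ∧
    ∀ s t : Set ℕ, s ≠ t → IsEmpty ((f s) ≃[L] (f t))

section Ordered

variable {M : Type w} [L.Structure M] [LinearOrder M]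

/-- The set of realizations in `M` of the 1-type `tp(a₀/c)`. -/
def pSet {k : ℕ} (c : Fin k → M) (a₀ : M) : Set M := {x | tp1 L c x = tp1 L c a₀}

/-- `φ(x, y)` holds of `(x, y)` over the parameters `c`. -/
def real2 {k : ℕ} (c : Fin k → M) (φ : L.Formula (Fin k ⊕ Fin 2)) (x y : M) : Prop :=
  Formula.Realize φ (Sum.elim c ![x, y])

/-- `φ(M, α)`, the set defined by `φ(x, α)`. -/
def phiSet {k : ℕ} (c : Fin k → M) (φ : L.Formula (Fin k ⊕ Fin 2)) (α : M) : Set M :=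
  {x | real2 L c φ x α}

/-- `S` is convex in `B`. -/
def ConvexIn {M : Type w} [LinearOrder M] (S B : Set M) : Prop :=
  ∀ a ∈ S, ∀ b ∈ S, ∀ y ∈ B, a ≤ y → y ≤ b → y ∈ S

/-- `φ(x,y)` is a `p`-preserving formula, `p = tp(a₀/c)`. -/
def PPreserving {k : ℕ} (c : Fin k → M) (a₀ : M) (φ : L.Formula (Fin k ⊕ Fin 2)) : Prop :=
  ∃ α ∈ pSet L c a₀, ∃ γ₁ ∈ pSet L c a₀, ∃ γ₂ ∈ pSet L c a₀,
    (pSet L c a₀ ∩ (phiSet L c φ α \ {α})).Nonempty ∧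
    ∀ z ∈ phiSet L c φ α, γ₁ < z ∧ z < γ₂

/-- `φ(x,y)` is convex to the right on `p`. -/
def ConvexRight {k : ℕ} (c : Fin k → M) (a₀ : M) (φ : L.Formula (Fin k ⊕ Fin 2)) : Prop :=
  ∃ α ∈ pSet L c a₀,
    ConvexIn (pSet L c a₀ ∩ phiSet L c φ α) Set.univ ∧
    α ∈ phiSet L c φ α ∧ ∀ z ∈ phiSet L c φ α, α ≤ z

/-- `φ(x,y)` is convex to the left on `p`. -/
def ConvexLeft {k : ℕ} (c : Fin k → M) (a₀ : M) (φ : L.Formula (Fin k ⊕ Fin 2)) : Prop :=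
  ∃ α ∈ pSet L c a₀,
    ConvexIn (pSet L c a₀ ∩ phiSet L c φ α) Set.univ ∧
    α ∈ phiSet L c φ α ∧ ∀ z ∈ phiSet L c φ α, z ≤ α

/-- `φ(x,y)` is a quasi-successor on `p`. -/
def IsQuasiSuccessor {k : ℕ} (c : Fin k → M) (a₀ : M)
    (φ : L.Formula (Fin k ⊕ Fin 2)) : Prop :=
  PPreserving L c a₀ φ ∧ (ConvexRight L c a₀ φ ∨ ConvexLeft L c a₀ φ) ∧
    ∀ α ∈ pSet L c a₀, ∀ β ∈ phiSet L c φ α ∩ pSet L c a₀,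
      (pSet L c a₀ ∩ (phiSet L c φ β \ phiSet L c φ α)).Nonempty

/-- `CRF(p)`: the family of all `p`-preserving convex to the right `A`-formulas. -/
def CRF {k : ℕ} (c : Fin k → M) (a₀ : M) : Set (L.Formula (Fin k ⊕ Fin 2)) :=
  {φ | PPreserving L c a₀ φ ∧ ConvexRight L c a₀ φ}

/-- `CRF(p)` is infinite (up to equivalence on `p`, i.e. infinitely many traces). -/
def CRFInfinite {k : ℕ} (c : Fin k → M) (a₀ : M) : Prop :=
  {g : M → Set M | ∃ φ ∈ CRF L c a₀,
    g = fun α => phiSet L c φ α ∩ pSet L c a₀}.Infinite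

/-- `CRF(p)` has a greatest formula on `p`. -/
def HasGreatestCRF {k : ℕ} (c : Fin k → M) (a₀ : M) : Prop :=
  ∃ φ ∈ CRF L c a₀, ∀ ψ ∈ CRF L c a₀, ∀ α ∈ pSet L c a₀,
    phiSet L c ψ α ∩ pSet L c a₀ ⊆ phiSet L c φ α ∩ pSet L c a₀

/-- `CRF(p)` has a least formula on `p`. -/
def HasLeastCRF {k : ℕ} (c : Fin k → M) (a₀ : M) : Prop :=
  ∃ φ ∈ CRF L c a₀, ∀ ψ ∈ CRF L c a₀, ∀ α ∈ pSet L c a₀,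
    phiSet L c φ α ∩ pSet L c a₀ ⊆ phiSet L c ψ α ∩ pSet L c a₀

/-- `chain n x y` holds iff `x ∈ φⁿ(M, y)` (the `n`-fold iterate of `φ`). -/
def chain {k : ℕ} (c : Fin k → M) (φ : L.Formula (Fin k ⊕ Fin 2)) :
    ℕ → M → M → Prop
  | 0, x, y => x = y
  | n + 1, x, y => ∃ z, chain c φ n z y ∧ real2 L c φ x z

/-- The neighborhood `V_{p,φ}(α)`. -/
def Vnb {k : ℕ} (c : Fin k → M) (a₀ : M) (φ : L.Formula (Fin k ⊕ Fin 2)) (α : M) :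
    Set M :=
  {γ | γ ∈ pSet L c a₀ ∧ ∃ n : ℕ, chain L c φ n γ α ∨ chain L c φ n α γ}

/-- Every element of `S` precedes every element of `S'`. -/
def SetLT {M : Type w} [LinearOrder M] (S S' : Set M) : Prop :=
  ∀ a ∈ S, ∀ b ∈ S', a < b

/-- The set of elements strictly above every member of `S` and strictly below every
member of `S'`. -/
def betweenSets {M : Type w} [LinearOrder M] (S S' : Set M) : Set M :=
  {y | (∀ a ∈ S, a < y) ∧ ∀ b ∈ S', y < b}

/-- The convex closure `φᶜ(M)` of the set defined by a 1-formula `φ` over parameters `c`. -/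
def convCl {β : Type*} (c : β → M) (φ : L.Formula (β ⊕ Fin 1)) : Set M :=
  {y | ∃ y₁ y₂ : M, Formula.Realize φ (Sum.elim c fun _ => y₁) ∧
    Formula.Realize φ (Sum.elim c fun _ => y₂) ∧ y₁ ≤ y ∧ y ≤ y₂}

/-- The convex type `tpᶜ(a/c)`, encoded as the set of 1-formulas `φ` over `c` whose
convex closure contains `a`. -/
def tpc {β : Type*} (c : β → M) (a : M) : Set (L.Formula (β ⊕ Fin 1)) :=
  {φ | a ∈ convCl L c φ}

/-- The set of realizations in `M` of the convex type `tpᶜ(a/c)`. -/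
def tpcRealizers {β : Type*} (c : β → M) (a : M) : Set M :=
  {y | ∀ φ ∈ tp1 L c a, y ∈ convCl L c φ}

/-- `(α, β)` realizes the partial type `q₀(x, y)` associated with the quasi-successor `φ`. -/
def RealizesQ0 {k : ℕ} (c : Fin k → M) (a₀ : M) (φ : L.Formula (Fin k ⊕ Fin 2))
    (α β : M) : Prop :=
  α < β ∧ α ∈ pSet L c a₀ ∧ β ∈ pSet L c a₀ ∧
  (∀ n : ℕ, ¬ chain L c φ n β α) ∧
  (∀ R : L.Formula (Fin k ⊕ Fin 2),
    (PPreserving L c a₀ R ∧ ConvexRight L c a₀ R ∧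
      ∀ n : ℕ, ∀ α' ∈ pSet L c a₀, ∀ γ ∈ pSet L c a₀,
        chain L c φ n γ α' → γ ∈ phiSet L c R α') →
    real2 L c R β α) ∧
  (∀ Lf : L.Formula (Fin k ⊕ Fin 2),
    (PPreserving L c a₀ Lf ∧ ConvexLeft L c a₀ Lf ∧
      ∀ n : ℕ, ∀ β' ∈ pSet L c a₀, ∀ γ ∈ pSet L c a₀,
        chain L c φ n β' γ → γ ∈ phiSet L c Lf β') →
    real2 L c Lf α β)

/-- The neighborhood `V_{p(M)}(α)` built from all of `CRF(p)`. -/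
def VCRF {k : ℕ} (c : Fin k → M) (a₀ : M) (α : M) : Set M :=
  {γ | γ ∈ pSet L c a₀ ∧ ∃ φ ∈ CRF L c a₀, real2 L c φ α γ ∨ real2 L c φ γ α}

/-- `ε_{φ,Θ}(M, α) = (φ(α,·) ∨ φ(·,α)) ∩ Θ(M)`. -/
def epsSet {k : ℕ} (c : Fin k → M) (θ : L.Formula (Fin k ⊕ Fin 1))
    (φ : L.Formula (Fin k ⊕ Fin 2)) (α : M) : Set M :=
  {y | (real2 L c φ α y ∨ real2 L c φ y α) ∧
    Formula.Realize θ (Sum.elim c fun _ => y)}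

/-- `Θ ∈ p` is a formula with `p(M) = pᶜ(M) ∩ Θ(M)`. -/
def ThetaWitness {k : ℕ} (c : Fin k → M) (a₀ : M) (θ : L.Formula (Fin k ⊕ Fin 1)) :
    Prop :=
  pSet L c a₀ =
    tpcRealizers L c a₀ ∩ {y | Formula.Realize θ (Sum.elim c fun _ => y)}

/-- The kernel `Ker_{p(M)}(α) = ⋂_{φ ∈ CRF(p)} ε_{φ,Θ}(M, α)`. -/
def KerSet {k : ℕ} (c : Fin k → M) (a₀ : M) (θ : L.Formula (Fin k ⊕ Fin 1)) (α : M) :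
    Set M :=
  ⋂ φ ∈ CRF L c a₀, epsSet L c θ φ α

/-- The formulas of `CRF(p)` strictly smaller than `ψ` on `p`. -/
def SmallerCRF {k : ℕ} (c : Fin k → M) (a₀ : M) (ψ : L.Formula (Fin k ⊕ Fin 2)) :
    Set (L.Formula (Fin k ⊕ Fin 2)) :=
  {φ ∈ CRF L c a₀ | ∃ α ∈ pSet L c a₀,
    phiSet L c φ α ∩ pSet L c a₀ ⊂ phiSet L c ψ α ∩ pSet L c a₀}

/-- The formulas of `CRF(p)` strictly greater than `ψ` on `p`. -/
def LargerCRF {k : ℕ} (c : Fin k → M) (a₀ : M) (ψ : L.Formula (Fin k ⊕ Fin 2)) :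
    Set (L.Formula (Fin k ⊕ Fin 2)) :=
  {φ ∈ CRF L c a₀ | ∃ α ∈ pSet L c a₀,
    phiSet L c ψ α ∩ pSet L c a₀ ⊂ phiSet L c φ α ∩ pSet L c a₀}

/-- `V^ψ_{p(M)}(α)`. -/
def Vpsi {k : ℕ} (c : Fin k → M) (a₀ : M) (θ : L.Formula (Fin k ⊕ Fin 1))
    (ψ : L.Formula (Fin k ⊕ Fin 2)) (α : M) : Set M :=
  ⋃ φ ∈ SmallerCRF L c a₀ ψ, epsSet L c θ φ α

/-- `Ker^ψ_{p(M)}(α)`. -/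
def Kerpsi {k : ℕ} (c : Fin k → M) (a₀ : M) (θ : L.Formula (Fin k ⊕ Fin 1))
    (ψ : L.Formula (Fin k ⊕ Fin 2)) (α : M) : Set M :=
  ⋂ φ ∈ LargerCRF L c a₀ ψ, epsSet L c θ φ α

/-- `φ(x,y)` is equivalence-generating (for convex-to-the-right formulas). -/
def EquivGenR {k : ℕ} (c : Fin k → M) (a₀ : M) (φ : L.Formula (Fin k ⊕ Fin 2)) : Prop :=
  ∀ α ∈ pSet L c a₀, ∀ β ∈ phiSet L c φ α ∩ pSet L c a₀,
    ∀ y : M, β ≤ y → (y ∈ phiSet L c φ α ↔ y ∈ phiSet L c φ β)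

/-- `φ(x,y)` is equivalence-generating (for convex-to-the-left formulas). -/
def EquivGenL {k : ℕ} (c : Fin k → M) (a₀ : M) (φ : L.Formula (Fin k ⊕ Fin 2)) : Prop :=
  ∀ α ∈ pSet L c a₀, ∀ β ∈ phiSet L c φ α ∩ pSet L c a₀,
    ∀ y : M, y ≤ β → (y ∈ phiSet L c φ α ↔ y ∈ phiSet L c φ β)

/-- The relation defined by the formula `E(x, y, b̄)` over parameters `c`. -/
def Erel {k m : ℕ} (c : Fin k → M) (E : L.Formula (Fin k ⊕ (Fin 2 ⊕ Fin m)))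
    (b : Fin m → M) (x y : M) : Prop :=
  Formula.Realize E (Sum.elim c (Sum.elim ![x, y] b))

/-- `r` is an equivalence relation on `P`. -/
def IsEquivOn {M : Type w} (r : M → M → Prop) (P : Set M) : Prop :=
  (∀ x ∈ P, r x x) ∧ (∀ x ∈ P, ∀ y ∈ P, r x y → r y x) ∧
    (∀ x ∈ P, ∀ y ∈ P, ∀ z ∈ P, r x y → r y z → r x z)

/-- The `r`-classes are convex in `P`. -/
def ClassesConvexIn {M : Type w} [LinearOrder M] (r : M → M → Prop) (P : Set M) : Prop :=
  ∀ x ∈ P, ConvexIn {y | y ∈ P ∧ r x y} P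

/-- The `r`-classes are mutually dense in `P`. -/
def ClassesMutuallyDense {M : Type w} [LinearOrder M] (r : M → M → Prop) (P : Set M) :
    Prop :=
  ∀ x ∈ P, ∀ y ∈ P, ¬ r x y →
    ∀ u ∈ P, ∀ v ∈ P, r x u → r x v → u < v → ∃ w ∈ P, r y w ∧ u < w ∧ w < v

/-- Every `r`-class is partitioned into infinitely many infinite `r'`-classes. -/
def RefinedIntoInfinitelyMany {M : Type w} (r r' : M → M → Prop) (P : Set M) : Prop :=
  (∀ x ∈ P, ∀ y ∈ P, r' x y → r x y) ∧
  (∀ x ∈ P, ∀ y ∈ P, r x y → {z | z ∈ P ∧ r' y z}.Infinite) ∧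
  ∀ x ∈ P, {C : Set M | ∃ y, y ∈ P ∧ r x y ∧ C = {z | z ∈ P ∧ r' y z}}.Infinite

/-- The Restriction on the (linearly ordered) theory of `M`. -/
def SatisfiesRestriction (M : Type w) [L.Structure M] [LinearOrder M] : Prop :=
  ∀ (k : ℕ) (c : Fin k → M) (a₀ : M),
    (∀ (m : ℕ) (E : L.Formula (Fin k ⊕ (Fin 2 ⊕ Fin m))) (bs : ℕ → Fin m → M),
        ¬ ∀ i : ℕ,
            IsEquivOn (Erel L c E (bs i)) (pSet L c a₀) ∧
            ClassesConvexIn (Erel L c E (bs i)) (pSet L c a₀) ∧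
            ClassesMutuallyDense (Erel L c E (bs i)) (pSet L c a₀) ∧
            RefinedIntoInfinitelyMany (Erel L c E (bs i)) (Erel L c E (bs (i + 1)))
              (pSet L c a₀)) ∧
    {q : Set (L.Formula (Fin k ⊕ Fin 1)) | ∃ y : M,
      tpc L c y = tpc L c a₀ ∧ q = tp1 L c y}.Finite ∧
    ∀ φ : L.Formula (Fin k ⊕ Fin 2),
      (PPreserving L c a₀ φ → ConvexRight L c a₀ φ → EquivGenR L c a₀ φ) ∧
      (PPreserving L c a₀ φ → ConvexLeft L c a₀ φ → EquivGenL L c a₀ φ)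

/-- `M₀` is a prime model (of the complete theory of `M`) over the finite tuple `xs`:
it is a countable atomic elementary substructure of `M` containing `xs`. -/
def IsPrimeOver (M₀ : L.ElementarySubstructure M) {r : ℕ} (xs : Fin r → M) : Prop :=
  (∀ i, xs i ∈ M₀) ∧ Countable M₀ ∧
    ∀ (n : ℕ) (a : Fin n → M₀), IsPrincipalT L xs (fun i => (a i : M))

/-- The 1-type `p = tp(a₀/c)` is extremely trivial. -/
def ExtremelyTrivial {k : ℕ} (c : Fin k → M) (a₀ : M) : Prop :=
  ∀ n : ℕ, 1 ≤ n → ∀ βs : Fin n → M, (∀ i, βs i ∈ pSet L c a₀) →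
    ∀ M₀ : L.ElementarySubstructure M, IsPrimeOver L M₀ (Fin.append c βs) →
      {y | y ∈ pSet L c a₀ ∧ y ∈ M₀} = Set.range βs

end Ordered

/-! Smallness yields, over every finite parameter set, a complete formula below each satisfiable
formula. Otherwise every satisfiable formula below it splits into two satisfiable halves, and a
given complete type contains at most one of them; so a single decreasing chain can avoid, one
after the other, each of the countably many complete types of `T`, and a realization of the whole
chain would have none of these types. Refining `φ` once for each new parameter `bᵢ₊₁` therefore
gives a decreasing chain of complete formulas `ψᵢ` over `Bᵢ ∪ D` (`i ≥ n`); a realization of the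
chain in an ultrapower of `M` has, for every `i ≥ n`, its type over `Bᵢ ∪ D` isolated by `ψᵢ`. -/

section CompleteFormulas

variable {L} {M : Type w} [L.Structure M] {N : Type x} [L.Structure N] {β : Type y}

theorem relabel_mem_tp1 {γ : Type*} (g : β → γ) (c : γ → M) (θ : L.Formula (β ⊕ Fin 1))
    (z : M) : θ.relabel (Sum.map g id) ∈ tp1 L c z ↔ θ ∈ tp1 L (c ∘ g) z := by
  simp only [tp1, Set.mem_ofPred_eq, Formula.realize_relabel, Sum.elim_comp_map,
    Function.comp_id]

theorem mem_tp1_comp_iff (f : M ↪ₑ[L] N) (c : β → M) (θ : L.Formula (β ⊕ Fin 1)) (z : M) :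
    θ ∈ tp1 L (f ∘ c) (f z) ↔ θ ∈ tp1 L c z := by
  have : Sum.elim (f ∘ c) (fun _ => f z) = f ∘ Sum.elim c fun _ : Fin 1 => z := by
    rw [Sum.comp_elim]; rfl
  simp only [tp1, Set.mem_ofPred_eq, this, f.map_formula]

theorem realize_iExs_fin_one_iff (c : β → M) (θ : L.Formula (β ⊕ Fin 1)) :
    (θ.iExs (Fin 1)).Realize c ↔ ∃ z : M, θ ∈ tp1 L c z := by
  rw [Formula.realize_iExs]
  refine ⟨fun ⟨v, hv⟩ => ⟨v 0, ?_⟩, fun ⟨z, hz⟩ => ⟨fun _ => z, hz⟩⟩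
  rwa [show v = fun _ => v 0 from funext fun i => congrArg v (Subsingleton.elim i 0)] at hv

theorem exists_mem_tp1_comp_iff (f : M ↪ₑ[L] N) (c : β → M) (θ : L.Formula (β ⊕ Fin 1)) :
    (∃ a : N, θ ∈ tp1 L (f ∘ c) a) ↔ ∃ z : M, θ ∈ tp1 L c z := by
  rw [← realize_iExs_fin_one_iff, ← realize_iExs_fin_one_iff, f.map_formula]

@[simp]
theorem inf_mem_tp1_iff {c : β → M} {ψ θ : L.Formula (β ⊕ Fin 1)} {z : M} :
    ψ ⊓ θ ∈ tp1 L c z ↔ ψ ∈ tp1 L c z ∧ θ ∈ tp1 L c z :=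
  Formula.realize_inf

@[simp]
theorem not_mem_tp1_iff {c : β → M} {θ : L.Formula (β ⊕ Fin 1)} {z : M} :
    ∼θ ∈ tp1 L c z ↔ θ ∉ tp1 L c z :=
  Formula.realize_not

def IsCompleteFormula (c : β → M) (ψ : L.Formula (β ⊕ Fin 1)) : Prop :=
  (∃ z, ψ ∈ tp1 L c z) ∧ ∀ z z', ψ ∈ tp1 L c z → ψ ∈ tp1 L c z' → tp1 L c z = tp1 L c z'

theorem IsCompleteFormula.isPrincipal1 {c : β → M} {ψ : L.Formula (β ⊕ Fin 1)}
    (hψ : IsCompleteFormula c ψ) {a : M} (ha : ψ ∈ tp1 L c a) : IsPrincipal1 L c a :=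
  ⟨ψ, ha, fun _ ha' => hψ.2 _ _ ha' ha⟩

theorem mem_tp1_comp_of_imp (f : M ↪ₑ[L] N) {c : β → M} {ψ θ : L.Formula (β ⊕ Fin 1)}
    (h : ∀ z, ψ ∈ tp1 L c z → θ ∈ tp1 L c z) {a : N} (ha : ψ ∈ tp1 L (f ∘ c) a) :
    θ ∈ tp1 L (f ∘ c) a := by
  by_contra hθ
  obtain ⟨z, hz⟩ := (exists_mem_tp1_comp_iff f c (ψ ⊓ ∼θ)).1 ⟨a, by simp [ha, hθ]⟩
  rw [inf_mem_tp1_iff, not_mem_tp1_iff] at hz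
  exact hz.2 (h z hz.1)

theorem IsCompleteFormula.map (f : M ↪ₑ[L] N) {c : β → M} {ψ : L.Formula (β ⊕ Fin 1)}
    (hψ : IsCompleteFormula c ψ) : IsCompleteFormula (f ∘ c) ψ := by
  refine ⟨?_, fun a a' ha ha' => ?_⟩
  · obtain ⟨z, hz⟩ := hψ.1
    exact ⟨f z, (mem_tp1_comp_iff f c ψ z).2 hz⟩
  · have mem_of_mem : ∀ a a' θ, ψ ∈ tp1 L (f ∘ c) a → ψ ∈ tp1 L (f ∘ c) a' →
        θ ∈ tp1 L (f ∘ c) a → θ ∈ tp1 L (f ∘ c) a' := by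
      intro a a' θ ha ha' hθ
      by_contra hθ'
      obtain ⟨z, hz⟩ := (exists_mem_tp1_comp_iff f c (ψ ⊓ θ)).1 ⟨a, by simp [ha, hθ]⟩
      obtain ⟨z', hz'⟩ := (exists_mem_tp1_comp_iff f c (ψ ⊓ ∼θ)).1 ⟨a', by simp [ha', hθ']⟩
      rw [inf_mem_tp1_iff] at hz
      rw [inf_mem_tp1_iff, not_mem_tp1_iff] at hz'
      exact hz'.2 (hψ.2 z z' hz.1 hz'.1 ▸ hz.2)
    ext θ
    exact ⟨mem_of_mem a a' θ ha ha', mem_of_mem a' a θ ha' ha⟩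

end CompleteFormulas

section Ultrapower

open Filter

variable {L} {M : Type w} [L.Structure M]

noncomputable def diagonalEmbedding [Nonempty M] :
    M ↪ₑ[L] (hyperfilter ℕ : Filter ℕ).Product (fun _ : ℕ => M) where
  toFun z := ((fun _ : ℕ => z : ℕ → M) : (hyperfilter ℕ : Filter ℕ).Product fun _ => M)
  map_formula' _ φ v := by
    have h := Ultraproduct.realize_formula_cast (u := hyperfilter ℕ) (M := fun _ : ℕ => M) φ
      (fun i _ => v i)
    rwa [eventually_const] at h

theorem exists_elementaryExtension_realizing_chain {ι : ℕ → Type*} (v : ∀ j, ι j → M)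
    (θ : ∀ j, L.Formula (ι j ⊕ Fin 1)) (hsat : ∀ j, ∃ z, θ j ∈ tp1 L (v j) z)
    (hchain : ∀ j z, θ (j + 1) ∈ tp1 L (v (j + 1)) z → θ j ∈ tp1 L (v j) z) :
    ∃ (N : Theory.ModelType.{u, v, max u v w} (L.completeTheory M)) (f : M ↪ₑ[L] N) (a : N),
      ∀ j, θ j ∈ tp1 L (f ∘ v j) a := by
  have : Nonempty M := (hsat 0).elim fun z _ => ⟨z⟩
  have hanti : Antitone fun j => {z | θ j ∈ tp1 L (v j) z} :=
    antitone_nat_of_succ_le hchain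
  choose y hy using hsat
  let U := (hyperfilter ℕ : Filter ℕ).Product fun _ : ℕ => M
  let a : U := ((y : ℕ → M) : U)
  have ha : ∀ j, θ j ∈ tp1 L (diagonalEmbedding (L := L) ∘ v j) a := by
    intro j
    have h := Ultraproduct.realize_formula_cast (u := hyperfilter ℕ) (M := fun _ : ℕ => M) (θ j)
      fun i k => Sum.elim (v j) (fun _ : Fin 1 => y k) i
    have hval : (fun i => ((fun k => Sum.elim (v j) (fun _ : Fin 1 => y k) i : ℕ → M) : U)) =
        Sum.elim (diagonalEmbedding (L := L) ∘ v j) fun _ : Fin 1 => a := by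
      funext i
      rcases i with t | t <;> rfl
    rw [hval] at h
    have hlarge : ∀ᶠ k in (hyperfilter ℕ : Filter ℕ), j ≤ k :=
      Nat.hyperfilter_le_atTop (eventually_ge_atTop j)
    exact h.2 (hlarge.mono fun k hk => hanti hk (hy k))
  have : U ⊨ L.completeTheory M :=
    (diagonalEmbedding.theory_model_iff (L.completeTheory M)).1 inferInstance
  let _ : L.Structure (ULift.{max u v} U) := Equiv.ulift.symm.inducedStructure
  let g : U ↪ₑ[L] ULift.{max u v} U :=
    (Equiv.inducedStructureEquiv Equiv.ulift.symm).toElementaryEmbedding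
  have : ULift.{max u v} U ⊨ L.completeTheory M :=
    (g.theory_model_iff (L.completeTheory M)).1 inferInstance
  let N := Theory.ModelType.of (L.completeTheory M) (ULift.{max u v} U)
  exact ⟨N, g.comp diagonalEmbedding, g a,
    fun j => (mem_tp1_comp_iff g _ _ a).2 (ha j)⟩

end Ultrapower

section Small

variable {L} {M : Type w} [L.Structure M] {β : Type y}

theorem exists_refinement_not_mem_completeType {γ : Type*} (E : β ⊕ Fin 1 → γ) {c : β → M}
    {ψ : L.Formula (β ⊕ Fin 1)} {z z' : M} (hz : ψ ∈ tp1 L c z) (hz' : ψ ∈ tp1 L c z')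
    (hne : tp1 L c z ≠ tp1 L c z') {T : L.Theory} (p : T.CompleteType γ) :
    ∃ ψ' : L.Formula (β ⊕ Fin 1), (∃ z, ψ' ∈ tp1 L c z) ∧
      (∀ z, ψ' ∈ tp1 L c z → ψ ∈ tp1 L c z) ∧ Formula.equivSentence (ψ'.relabel E) ∉ p := by
  obtain ⟨θ, hθz, hθz'⟩ : ∃ θ, θ ∈ tp1 L c z ∧ ∼θ ∈ tp1 L c z' := by
    obtain ⟨θ, hθ⟩ := not_forall.1 (mt Set.ext hne)
    by_cases h : θ ∈ tp1 L c z
    · exact ⟨θ, h, not_mem_tp1_iff.2 fun h' => hθ (iff_of_true h h')⟩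
    · exact ⟨∼θ, not_mem_tp1_iff.2 h, by simpa using fun h' => hθ (iff_of_false h h')⟩
  obtain ⟨N, w, rfl⟩ := T.exists_modelType_is_realized_in p
  have mem_typeOf (φ : L.Formula (β ⊕ Fin 1)) :
      Formula.equivSentence (φ.relabel E) ∈ T.typeOf w ↔ φ.Realize (w ∘ E) := by
    rw [Theory.CompleteType.formula_mem_typeOf, Formula.realize_relabel]
  by_cases hθw : θ.Realize (w ∘ E)
  · refine ⟨ψ ⊓ ∼θ, ⟨z', inf_mem_tp1_iff.2 ⟨hz', hθz'⟩⟩, fun _ h => (inf_mem_tp1_iff.1 h).1, ?_⟩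
    simp [mem_typeOf, hθw]
  · refine ⟨ψ ⊓ θ, ⟨z, inf_mem_tp1_iff.2 ⟨hz, hθz⟩⟩, fun _ h => (inf_mem_tp1_iff.1 h).1, ?_⟩
    simp [mem_typeOf, hθw]

theorem IsSmall.exists_isCompleteFormula_imp (hsmall : IsSmall L (L.completeTheory M))
    [Finite β] (c : β → M) {χ : L.Formula (β ⊕ Fin 1)} (hχ : ∃ z, χ ∈ tp1 L c z) :
    ∃ ψ, IsCompleteFormula c ψ ∧ ∀ z, ψ ∈ tp1 L c z → χ ∈ tp1 L c z := by
  by_contra hno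
  have : Nonempty M := hχ.elim fun z _ => ⟨z⟩
  obtain ⟨k, ⟨E⟩⟩ := Finite.exists_equiv_fin (β ⊕ Fin 1)
  have : Countable ((L.completeTheory M).CompleteType (Fin k)) := hsmall k
  have : Nonempty ((L.completeTheory M).CompleteType (Fin k)) :=
    ⟨(L.completeTheory M).typeOf fun _ => Classical.arbitrary M⟩
  obtain ⟨q, hq⟩ := exists_surjective_nat ((L.completeTheory M).CompleteType (Fin k))
  let Good (ψ : L.Formula (β ⊕ Fin 1)) : Prop :=
    (∃ z, ψ ∈ tp1 L c z) ∧ ∀ z, ψ ∈ tp1 L c z → χ ∈ tp1 L c z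
  have avoid (ψ : Subtype Good) (p : (L.completeTheory M).CompleteType (Fin k)) :
      ∃ ψ' : Subtype Good, (∀ z, ψ'.1 ∈ tp1 L c z → ψ.1 ∈ tp1 L c z) ∧
        Formula.equivSentence (ψ'.1.relabel E) ∉ p := by
    obtain ⟨ψ, hsat, hψχ⟩ := ψ
    obtain ⟨z, z', hz, hz', hne⟩ : ∃ z z', ψ ∈ tp1 L c z ∧ ψ ∈ tp1 L c z' ∧
        tp1 L c z ≠ tp1 L c z' := by
      by_contra h
      push Not at h
      exact hno ⟨ψ, ⟨hsat, h⟩, hψχ⟩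
    obtain ⟨ψ', hsat', himp, hnot⟩ := exists_refinement_not_mem_completeType E hz hz' hne p
    exact ⟨⟨ψ', hsat', fun z h => hψχ z (himp z h)⟩, himp, hnot⟩
  choose next hnext_imp hnext_not using avoid
  let Ψ (j : ℕ) : Subtype Good := Nat.rec ⟨χ, hχ, fun _ => id⟩ (fun j ψ => next ψ (q j)) j
  obtain ⟨N, f, a, ha⟩ := exists_elementaryExtension_realizing_chain (fun _ => c)
    (fun j => (Ψ j).1) (fun j => (Ψ j).2.1) (fun j => hnext_imp (Ψ j) (q j))
  obtain ⟨j, hj⟩ := hq ((L.completeTheory M).typeOf (Sum.elim (f ∘ c) (fun _ => a) ∘ E.symm))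
  have hmem : Formula.equivSentence ((Ψ (j + 1)).1.relabel E) ∈ q j := by
    rw [hj, Theory.CompleteType.formula_mem_typeOf, Formula.realize_relabel, Function.comp_assoc,
      Equiv.symm_comp_self, Function.comp_id]
    exact ha (j + 1)
  exact hnext_not (Ψ j) (q j) hmem

theorem IsSmall.exists_isCompleteFormula_chain (hsmall : IsSmall L (L.completeTheory M))
    {ι : ℕ → Type y} [∀ j, Finite (ι j)] (v : ∀ j, ι j → M) (r : ∀ j, ι j → ι (j + 1))
    (hr : ∀ j, v (j + 1) ∘ r j = v j) {χ : L.Formula (ι 0 ⊕ Fin 1)}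
    (hχ : ∃ z, χ ∈ tp1 L (v 0) z) :
    ∃ Ψ : ∀ j, L.Formula (ι j ⊕ Fin 1), (∀ j, IsCompleteFormula (v j) (Ψ j)) ∧
      (∀ j z, Ψ (j + 1) ∈ tp1 L (v (j + 1)) z → Ψ j ∈ tp1 L (v j) z) ∧
      ∀ z, Ψ 0 ∈ tp1 L (v 0) z → χ ∈ tp1 L (v 0) z := by
  obtain ⟨ψ₀, hψ₀, hψ₀χ⟩ := hsmall.exists_isCompleteFormula_imp (v 0) hχ
  have step (j : ℕ) (ψ : {ψ // IsCompleteFormula (v j) ψ}) :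
      ∃ ψ' : {ψ' // IsCompleteFormula (v (j + 1)) ψ'},
        ∀ z, ψ'.1 ∈ tp1 L (v (j + 1)) z → ψ.1 ∈ tp1 L (v j) z := by
    have hlift (z : M) :
        ψ.1.relabel (Sum.map (r j) id) ∈ tp1 L (v (j + 1)) z ↔ ψ.1 ∈ tp1 L (v j) z := by
      rw [relabel_mem_tp1, hr]
    obtain ⟨z, hz⟩ := ψ.2.1
    obtain ⟨ψ', hψ', himp⟩ :=
      hsmall.exists_isCompleteFormula_imp (v (j + 1)) ⟨z, (hlift z).2 hz⟩
    exact ⟨⟨ψ', hψ'⟩, fun z h => (hlift z).1 (himp z h)⟩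
  choose next hnext using step
  let Ψ (j : ℕ) : {ψ // IsCompleteFormula (v j) ψ} :=
    Nat.rec (motive := fun j => {ψ // IsCompleteFormula (v j) ψ}) ⟨ψ₀, hψ₀⟩ next j
  exact ⟨fun j => (Ψ j).1, fun j => (Ψ j).2, fun j => hnext j (Ψ j), hψ₀χ⟩

end Small

theorem statement_0_general {L : FirstOrder.Language.{u, v}}
    {M : Type w} [L.Structure M]
    (hsmall : IsSmall L (L.completeTheory M))
    {m : ℕ} (d : Fin m → M) (b : ℕ → M)
    (n : ℕ) (φ : L.Formula ((Fin n ⊕ Fin m) ⊕ Fin 1))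
    (hsat : ∃ y : M,
      Formula.Realize φ (Sum.elim (Sum.elim (fun i : Fin n => b i.val) d) fun _ => y)) :
    ∃ (N : Theory.ModelType.{u, v, max u v w} (L.completeTheory M))
      (h : M ↪ₑ[L] N) (a : N),
      Formula.Realize φ
        (Sum.elim (Sum.elim (fun i : Fin n => h (b i.val)) (fun j => h (d j)))
          fun _ => a) ∧
      ∀ i : ℕ, n ≤ i →
        IsPrincipal1 L
          (Sum.elim (fun j : Fin i => h (b j.val)) (fun j => h (d j)) :
            (Fin i ⊕ Fin m) → N) a := by
  let v (j : ℕ) : Fin (n + j) ⊕ Fin m → M := Sum.elim (fun t => b t) d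
  have hv (j : ℕ) : v (j + 1) ∘ Sum.map Fin.castSucc id = v j := by
    funext t
    rcases t with t | t <;> rfl
  obtain ⟨Ψ, hcomplete, hchain, hφ⟩ :=
    hsmall.exists_isCompleteFormula_chain v (fun _ => Sum.map Fin.castSucc id) hv hsat
  obtain ⟨N, h, a, ha⟩ :=
    exists_elementaryExtension_realizing_chain v Ψ (fun j => (hcomplete j).1) hchain
  refine ⟨N, h, a, ?_, fun i hi => ?_⟩
  · have := mem_tp1_comp_of_imp h hφ (ha 0)
    rwa [Sum.comp_elim] at this
  · obtain ⟨j, rfl⟩ := Nat.exists_eq_add_of_le hi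
    have := ((hcomplete j).map h).isPrincipal1 (ha j)
    rwa [Sum.comp_elim] at this

/-- Lemma 1. Let `T = Th(M)` be a small countable complete theory,
`D = range d` a finite and `B = range b` a countable subset of the model `M`. Every
satisfiable `(B ∪ D)`-formula `φ(x, b̄ₙ, d̄)` belongs to a complete 1-type `q` over
`B ∪ D` (given here by the type of a realization `a` in an elementary extension `N`)
whose restriction to `Bᵢ ∪ D` is principal for every `i ≥ n`. -/
theorem statement_0 {L : FirstOrder.Language.{u, v}} (hL : Countable L.Symbols)
    {M : Type w} [L.Structure M] [Nonempty M]
    (hsmall : IsSmall L (L.completeTheory M))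
    {m : ℕ} (d : Fin m → M) (b : ℕ → M)
    (n : ℕ) (φ : L.Formula ((Fin n ⊕ Fin m) ⊕ Fin 1))
    (hsat : ∃ y : M,
      Formula.Realize φ (Sum.elim (Sum.elim (fun i : Fin n => b i.val) d) fun _ => y)) :
    ∃ (N : Theory.ModelType.{u, v, max u v w} (L.completeTheory M))
      (h : M ↪ₑ[L] N) (a : N),
      Formula.Realize φ
        (Sum.elim (Sum.elim (fun i : Fin n => h (b i.val)) (fun j => h (d j)))
          fun _ => a) ∧
      ∀ i : ℕ, n ≤ i →
        IsPrincipal1 L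
          (Sum.elim (fun j : Fin i => h (b j.val)) (fun j => h (d j)) :
            (Fin i ⊕ Fin m) → N) a :=
  statement_0_general hsmall d b n φ hsat

end Paper
end

section
/- Let M be a countable model of a small countable complete theory T, and let B_1 ⊆ B_2 ⊆ M. Then D(A^{B_1}) ⊆ D(A^{B_2}), i.e. the finite diagram of the model constructed over B_1 is contained in the finite diagram of the model constructed over B_2. -/
/-!
A tuple `ā` of `A^{B₁}` has its type over some `b̄ ⊆ B₁` isolated by a formula `φ(x̄, b̄)`.
Both constructed models contain `B₁` elementarily, so the images of `b̄` in `A^{B₁}` and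
`A^{B₂}` have the same type. Hence `∃ x̄, φ(x̄, b̄)` holds in `A^{B₂}`, and for every
`ψ ∈ tp(ā/b̄)` so does `∀ x̄, φ(x̄, b̄) → ψ(x̄, b̄)`; any witness there realizes `tp(ā)`.
-/

namespace Paper

open FirstOrder FirstOrder.Language Set

universe u v w x y

variable (L : FirstOrder.Language.{u, v})

section TypeTransfer

variable {L} {M : Type*} {N : Type*} [L.Structure M] [L.Structure N]

theorem tp0_eq_of_subset {α : Type*} {v : α → M} {w : α → N} (h : tp0 L v ⊆ tp0 L w) :
    tp0 L v = tp0 L w := by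
  refine h.antisymm fun φ hφ => ?_
  by_contra hφv
  exact Formula.realize_not.mp (h (Formula.realize_not.mpr hφv)) hφ

theorem tp0_eq_of_tpT_eq {β γ : Type*} {c : β → M} {d : β → N} {a : γ → M} {a' : γ → N}
    (h : tpT L c a = tpT L d a') : tp0 L a = tp0 L a' := by
  ext ψ
  simpa [tpT, tp0, Formula.realize_relabel, Sum.elim_comp_inr] using
    Set.ext_iff.mp h (ψ.relabel Sum.inr)

theorem PartialElem.tp0_eq {B : Set M} {g : B → N} (hg : PartialElem L B g) {n : ℕ}
    (b : Fin n → B) : tp0 L (fun i => (b i : M)) = tp0 L (fun i => g (b i)) :=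
  Set.ext fun φ => hg n φ b

theorem IsPrincipalT.exists_tpT_eq {β γ : Type*} [Finite γ] {c : β → M} {d : β → N}
    (hcd : tp0 L c = tp0 L d) {a : γ → M} (ha : IsPrincipalT L c a) :
    ∃ a' : γ → N, tpT L c a = tpT L d a' := by
  obtain ⟨φ, hφa, hφ⟩ := ha
  obtain ⟨a', ha'⟩ : ∃ a' : γ → N, φ.Realize (Sum.elim d a') := by
    have : (φ.iExs γ).Realize c := Formula.realize_iExs.mpr ⟨a, hφa⟩
    exact Formula.realize_iExs.mp (hcd.subset this)
  refine ⟨a', tp0_eq_of_subset fun ψ hψ => ?_⟩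
  have hφψ : ((φ.imp ψ).iAlls γ).Realize c :=
    Formula.realize_iAlls.mpr fun x hx => by
      change ψ ∈ tpT L c x
      rwa [hφ x hx]
  exact Formula.realize_iAlls.mp (hcd.subset hφψ) a' ha'

end TypeTransfer

theorem statement_2_general {L : FirstOrder.Language.{u, v}}
    {M : Type w} [L.Structure M]
    (B₁ B₂ : Set M) (h12 : B₁ ⊆ B₂)
    (A₁ : Type x) [L.Structure A₁] (e₁ : B₁ → A₁)
    (A₂ : Type y) [L.Structure A₂] (e₂ : B₂ → A₂)
    (h₁ : IsConstructedOver L (L.completeTheory M) B₁ A₁ e₁)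
    (h₂ : IsConstructedOver L (L.completeTheory M) B₂ A₂ e₂) :
    FinDiagSubset L A₁ A₂ := by
  obtain ⟨-, -, he₁, hprin₁⟩ := h₁
  obtain ⟨-, -, he₂, -⟩ := h₂
  intro n a
  obtain ⟨k, b, -, ha⟩ := hprin₁ n a 0 Fin.elim0
  have hb : tp0 L (fun i => e₁ (b i)) = tp0 L (fun i => e₂ (Set.inclusion h12 (b i))) :=
    (he₁.tp0_eq b).symm.trans (he₂.tp0_eq (Set.inclusion h12 ∘ b))
  obtain ⟨a', ha'⟩ := ha.exists_tpT_eq hb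
  exact ⟨a', tp0_eq_of_tpT_eq ha'⟩

/-- Corollary 1, part 1. If `B₁ ⊆ B₂` are subsets of a countable model
`M` of a small countable complete theory, then the finite diagram of the constructed
model `A^{B₁}` is contained in that of `A^{B₂}`. -/
theorem statement_2 {L : FirstOrder.Language.{u, v}} (hL : Countable L.Symbols)
    {M : Type w} [L.Structure M] [Nonempty M] (hMc : Countable M)
    (hsmall : IsSmall L (L.completeTheory M))
    (B₁ B₂ : Set M) (h12 : B₁ ⊆ B₂)
    (A₁ : Type x) [L.Structure A₁] (e₁ : B₁ → A₁)
    (A₂ : Type y) [L.Structure A₂] (e₂ : B₂ → A₂)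
    (h₁ : IsConstructedOver L (L.completeTheory M) B₁ A₁ e₁)
    (h₂ : IsConstructedOver L (L.completeTheory M) B₂ A₂ e₂) :
    FinDiagSubset L A₁ A₂ :=
  statement_2_general B₁ B₂ h12 A₁ e₁ A₂ e₂ h₁ h₂

end Paper
end

section
/- Let T be a small countable complete linearly ordered theory satisfying the Restriction, A a finite subset of a countable saturated model M of T, and p(x) ∈ S_1(A) a non-algebraic 1-type such that CRF(p) is infinite and has no least formula on p. Let α_1, α_2 ∈ p(M) with α_1 ≠ α_2 and α_2 ∈ Ker_{p(M)}(α_1). Then the type tp(α_2/α_1) is non-principal. -/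
namespace Paper

open FirstOrder FirstOrder.Language Set

universe u v w x y

variable (L : FirstOrder.Language.{u, v})

/-!
If `R(x, α₁)` isolated `tp(α₂/α₁)`, every realization of `R(·, α₁)` would lie, like `α₂`, in the
kernel of `α₁`. Since `M` is ω-saturated, what holds at one realization of `p` holds at all of
them (one back-and-forth step at a time), so for every `α ∈ p(M)` the points of `p(M)` satisfying
`R(·, α)` lie in the kernel of `α`. After swapping the variables of `R` if `α₂ < α₁`, the formula
"`y ≤ x ≤ w` for some `w` with `R(w, y) ∧ Θ(w) ∧ ψ₀(w, y)`", where `ψ₀ ∈ CRF(p)` keeps `w` inside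
`p(M)`, belongs to `CRF(p)` and lies below every member of `CRF(p)`: a least formula.
-/

section Formulas

variable {L : FirstOrder.Language.{u, v}} {M : Type w} [L.Structure M]

lemma realize_relabel_sumMap {α : Type*} {m n : ℕ} {φ : L.Formula (α ⊕ Fin m)}
    {σ : Fin m → Fin n} {c : α → M} {v : Fin n → M} :
    (φ.relabel (Sum.map id σ)).Realize (Sum.elim c v) ↔ φ.Realize (Sum.elim c (v ∘ σ)) := by
  rw [Formula.realize_relabel, Sum.elim_comp_map, Function.comp_id]

noncomputable def exCons {α : Type*} {n : ℕ} (φ : L.Formula (α ⊕ Fin (n + 1))) :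
    L.Formula (α ⊕ Fin n) :=
  (φ.relabel (Sum.elim (Sum.inl ∘ Sum.inl) (Fin.cons (Sum.inr 0) (Sum.inl ∘ Sum.inr)))).iExs
    (Fin 1)

lemma realize_exCons {α : Type*} {n : ℕ} {φ : L.Formula (α ⊕ Fin (n + 1))} {c : α → M}
    {v : Fin n → M} :
    (exCons φ).Realize (Sum.elim c v) ↔ ∃ x, φ.Realize (Sum.elim c (Fin.cons x v)) := by
  have key : ∀ i : Fin 1 → M, Sum.elim (Sum.elim c v) i ∘
      Sum.elim (Sum.inl ∘ Sum.inl) (Fin.cons (Sum.inr 0) (Sum.inl ∘ Sum.inr)) =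
      Sum.elim c (Fin.cons (i 0) v) := by
    intro i
    ext (a | j)
    · rfl
    · exact Fin.cases rfl (fun _ => rfl) j
  simp only [exCons, Formula.realize_iExs, Formula.realize_relabel, key]
  exact ⟨fun ⟨i, hi⟩ => ⟨i 0, hi⟩, fun ⟨x, hx⟩ => ⟨fun _ => x, hx⟩⟩

noncomputable def swapVars {k : ℕ} (ψ : L.Formula (Fin k ⊕ Fin 2)) : L.Formula (Fin k ⊕ Fin 2) :=
  ψ.relabel (Sum.map id ![1, 0])

lemma real2_swapVars {k : ℕ} {c : Fin k → M} {ψ : L.Formula (Fin k ⊕ Fin 2)} {x y : M} :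
    real2 L c (swapVars ψ) x y ↔ real2 L c ψ y x := by
  have : ![x, y] ∘ ![1, 0] = ![y, x] := by ext i; fin_cases i <;> rfl
  rw [real2, swapVars, realize_relabel_sumMap, this, real2]

variable [L.IsOrdered]

def leVar {α : Type*} {n : ℕ} (i j : Fin n) : L.Formula (α ⊕ Fin n) :=
  Term.le (Term.var (Sum.inl (Sum.inr i))) (Term.var (Sum.inl (Sum.inr j)))

lemma realize_leVar [LE M] [L.OrderedStructure M] {α : Type*} {n : ℕ} {i j : Fin n}
    {c : α → M} {v : Fin n → M} :
    (leVar (L := L) i j).Realize (Sum.elim c v) ↔ v i ≤ v j := by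
  simp [leVar, Formula.Realize]

end Formulas

section SameType

variable {L : FirstOrder.Language.{u, v}} {M : Type w} [L.Structure M] {k n : ℕ}
  {c : Fin k → M} {a b : Fin n → M}

lemma realize_comp_iff_of_tpT_eq (h : tpT L c a = tpT L c b) {m : ℕ}
    (φ : L.Formula (Fin k ⊕ Fin m)) (σ : Fin m → Fin n) :
    φ.Realize (Sum.elim c (a ∘ σ)) ↔ φ.Realize (Sum.elim c (b ∘ σ)) := by
  simpa only [tpT, Set.mem_ofPred_eq, realize_relabel_sumMap] using
    Set.ext_iff.1 h (φ.relabel (Sum.map id σ))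

lemma real2_iff_of_tpT_eq (h : tpT L c a = tpT L c b) (φ : L.Formula (Fin k ⊕ Fin 2))
    (i j : Fin n) : real2 L c φ (a i) (a j) ↔ real2 L c φ (b i) (b j) := by
  have hσ : ∀ x : Fin n → M, x ∘ ![i, j] = ![x i, x j] := fun x => by
    ext t; fin_cases t <;> rfl
  simpa only [real2, hσ] using realize_comp_iff_of_tpT_eq h φ ![i, j]

lemma mem_pSet_iff_of_tpT_eq (h : tpT L c a = tpT L c b) {a₀ : M} (i : Fin n) :
    a i ∈ pSet L c a₀ ↔ b i ∈ pSet L c a₀ := by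
  have : tp1 L c (a i) = tp1 L c (b i) :=
    Set.ext fun φ => realize_comp_iff_of_tpT_eq h φ fun _ => i
  simp only [pSet, Set.mem_ofPred_eq, this]

lemma le_iff_of_tpT_eq [L.IsOrdered] [LE M] [L.OrderedStructure M] (h : tpT L c a = tpT L c b)
    (i j : Fin n) : a i ≤ a j ↔ b i ≤ b j := by
  simpa only [tpT, Set.mem_ofPred_eq, realize_leVar] using Set.ext_iff.1 h (leVar i j)

lemma lt_iff_of_tpT_eq [L.IsOrdered] [LinearOrder M] [L.OrderedStructure M]
    (h : tpT L c a = tpT L c b) (i j : Fin n) : a i < a j ↔ b i < b j := by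
  simpa only [not_le] using (le_iff_of_tpT_eq h j i).not

lemma tpT_eq_of_mem_pSet {a₀ y y' : M} (hy : y ∈ pSet L c a₀) (hy' : y' ∈ pSet L c a₀) :
    tpT L c ![y] = tpT L c ![y'] := by
  have hvec : ∀ z : M, (![z] : Fin 1 → M) = fun _ => z := fun z => by
    ext i; fin_cases i; rfl
  rw [hvec, hvec]
  exact hy.trans hy'.symm

lemma exists_tpT_cons_eq (hMsat : OmegaSaturated L M) (h : tpT L c a = tpT L c b) (d : M) :
    ∃ d', tpT L c (Fin.cons d a) = tpT L c (Fin.cons d' b) := by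
  -- `ρ` reads a formula in `(x, b)` over `c` as a formula in `x` over the parameters `(c, b)`.
  set ρ : Fin k ⊕ Fin (n + 1) → Fin (k + n) ⊕ Fin 1 :=
    Sum.elim (Sum.inl ∘ Fin.castAdd n) (Fin.cons (Sum.inr 0) (Sum.inl ∘ Fin.natAdd k))
  have hρ : ∀ (φ : L.Formula (Fin k ⊕ Fin (n + 1))) (x : M),
      (φ.relabel ρ).Realize (Sum.elim (Fin.append c b) fun _ => x) ↔
        φ.Realize (Sum.elim c (Fin.cons x b)) := by
    intro φ x
    rw [Formula.realize_relabel]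
    congr! 1
    ext (i | j)
    · simp [ρ]
    · exact Fin.cases (by simp [ρ]) (fun j => by simp [ρ]) j
  have hfin : ∀ S₀ : Finset (L.Formula (Fin (k + n) ⊕ Fin 1)),
      ↑S₀ ⊆ (·.relabel ρ) '' tpT L c (Fin.cons d a) →
        ∃ x, ∀ φ ∈ S₀, φ.Realize (Sum.elim (Fin.append c b) fun _ => x) := by
    intro S₀ hS₀
    choose φ hφ hφρ using fun s : S₀ => hS₀ s.2
    have hex : exCons (Formula.iInf φ) ∈ tpT L c a :=
      realize_exCons.2 ⟨d, Formula.realize_iInf.2 hφ⟩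
    rw [h] at hex
    obtain ⟨x, hx⟩ := realize_exCons.1 hex
    refine ⟨x, fun s hs => ?_⟩
    rw [show s = (φ ⟨s, hs⟩).relabel ρ from (hφρ ⟨s, hs⟩).symm, hρ]
    exact Formula.realize_iInf.1 hx ⟨s, hs⟩
  obtain ⟨d', hd'⟩ := hMsat (k + n) (Fin.append c b) _ hfin
  refine ⟨d', Set.Subset.antisymm (fun φ hφ => (hρ φ d').1 (hd' _ ⟨φ, hφ, rfl⟩)) ?_⟩
  intro φ hφ
  by_contra hφ'
  exact (hρ φ.not d').1 (hd' _ ⟨φ.not, hφ', rfl⟩) hφ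

end SameType

section Theta

variable {L : FirstOrder.Language.{u, v}} {M : Type w} [L.Structure M] [LinearOrder M] {k : ℕ}
  {c : Fin k → M} {a₀ : M} {θ : L.Formula (Fin k ⊕ Fin 1)}

lemma realize_of_mem_pSet (hθ : ThetaWitness L c a₀ θ) {y : M} (hy : y ∈ pSet L c a₀) :
    θ.Realize (Sum.elim c fun _ => y) :=
  (hθ.subset hy).2

lemma mem_pSet_of_le_of_le (hθ : ThetaWitness L c a₀ θ) {a b u : M} (ha : a ∈ pSet L c a₀)
    (hb : b ∈ pSet L c a₀) (hau : a ≤ u) (hub : u ≤ b) (hu : θ.Realize (Sum.elim c fun _ => u)) :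
    u ∈ pSet L c a₀ := by
  rw [hθ]
  exact ⟨fun φ hφ => ⟨a, b, (Set.ext_iff.1 ha φ).2 hφ, (Set.ext_iff.1 hb φ).2 hφ, hau, hub⟩, hu⟩

end Theta

section Uniformity

variable {L : FirstOrder.Language.{u, v}} [L.IsOrdered] {M : Type w} [L.Structure M]
  [LinearOrder M] [L.OrderedStructure M] {k : ℕ} {c : Fin k → M} {a₀ y : M}
  {ψ : L.Formula (Fin k ⊕ Fin 2)}

lemma ConvexRight.mem_self_and_le (hMsat : OmegaSaturated L M) (hψ : ConvexRight L c a₀ ψ)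
    (hy : y ∈ pSet L c a₀) : y ∈ phiSet L c ψ y ∧ ∀ z ∈ phiSet L c ψ y, y ≤ z := by
  obtain ⟨α, hα, -, hself, hleft⟩ := hψ
  have h := tpT_eq_of_mem_pSet hy hα
  refine ⟨(real2_iff_of_tpT_eq h ψ 0 0).2 hself, fun z hz => ?_⟩
  obtain ⟨z', hz'⟩ := exists_tpT_cons_eq hMsat h z
  exact (le_iff_of_tpT_eq hz' 1 0).2 (hleft z' ((real2_iff_of_tpT_eq hz' ψ 0 1).1 hz))

lemma ConvexRight.convexIn (hMsat : OmegaSaturated L M) (hψ : ConvexRight L c a₀ ψ)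
    (hy : y ∈ pSet L c a₀) : ConvexIn (pSet L c a₀ ∩ phiSet L c ψ y) univ := by
  obtain ⟨α, hα, hconv, -, -⟩ := hψ
  rintro a ⟨hap, ha⟩ b ⟨hbp, hb⟩ u - hau hub
  obtain ⟨a', h₁⟩ := exists_tpT_cons_eq hMsat (tpT_eq_of_mem_pSet hy hα) a
  obtain ⟨b', h₂⟩ := exists_tpT_cons_eq hMsat h₁ b
  obtain ⟨u', h₃⟩ := exists_tpT_cons_eq hMsat h₂ u
  have hu' := hconv a' ⟨(mem_pSet_iff_of_tpT_eq h₃ 2).1 hap, (real2_iff_of_tpT_eq h₃ ψ 2 3).1 ha⟩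
    b' ⟨(mem_pSet_iff_of_tpT_eq h₃ 1).1 hbp, (real2_iff_of_tpT_eq h₃ ψ 1 3).1 hb⟩ u' trivial
    ((le_iff_of_tpT_eq h₃ 2 0).1 hau) ((le_iff_of_tpT_eq h₃ 0 1).1 hub)
  exact ⟨(mem_pSet_iff_of_tpT_eq h₃ 0).2 hu'.1, (real2_iff_of_tpT_eq h₃ ψ 0 3).2 hu'.2⟩

lemma PPreserving.exists_bounds (hMsat : OmegaSaturated L M) (hψ : PPreserving L c a₀ ψ)
    (hy : y ∈ pSet L c a₀) :
    ∃ γ₁ ∈ pSet L c a₀, ∃ γ₂ ∈ pSet L c a₀, ∀ z ∈ phiSet L c ψ y, γ₁ < z ∧ z < γ₂ := by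
  obtain ⟨α, hα, γ₁, hγ₁, γ₂, hγ₂, -, hbd⟩ := hψ
  obtain ⟨g₁, h₁⟩ := exists_tpT_cons_eq hMsat (tpT_eq_of_mem_pSet hα hy) γ₁
  obtain ⟨g₂, h₂⟩ := exists_tpT_cons_eq hMsat h₁ γ₂
  refine ⟨g₁, (mem_pSet_iff_of_tpT_eq h₂ 1).1 hγ₁, g₂, (mem_pSet_iff_of_tpT_eq h₂ 0).1 hγ₂,
    fun z hz => ?_⟩
  obtain ⟨z', h₃⟩ := exists_tpT_cons_eq hMsat h₂.symm z
  have hz' := hbd z' ((real2_iff_of_tpT_eq h₃ ψ 0 3).1 hz)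
  exact ⟨(lt_iff_of_tpT_eq h₃ 2 0).2 hz'.1, (lt_iff_of_tpT_eq h₃ 0 1).2 hz'.2⟩

end Uniformity

/-- `R(M, α) ∩ p(M) ⊆ Ker_{p(M)}(α)` for every `α ∈ p(M)`. -/
def IsKernelFormula (L : FirstOrder.Language.{u, v}) {M : Type w} [L.Structure M]
    [LinearOrder M] {k : ℕ} (c : Fin k → M) (a₀ : M) (R : L.Formula (Fin k ⊕ Fin 2)) : Prop :=
  ∀ α ∈ pSet L c a₀, ∀ w ∈ pSet L c a₀, real2 L c R w α →
    ∀ φ ∈ CRF L c a₀, real2 L c φ w α ∨ real2 L c φ α w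

lemma IsKernelFormula.swapVars {L : FirstOrder.Language.{u, v}} {M : Type w} [L.Structure M]
    [LinearOrder M] {k : ℕ} {c : Fin k → M} {a₀ : M} {R : L.Formula (Fin k ⊕ Fin 2)}
    (hR : IsKernelFormula L c a₀ R) : IsKernelFormula L c a₀ (swapVars R) :=
  fun α hα w hw hRw φ hφ => (hR w hw α hα (real2_swapVars.1 hRw) φ hφ).symm

section Kernel

variable {L : FirstOrder.Language.{u, v}} [L.IsOrdered] {M : Type w} [L.Structure M]
  [LinearOrder M] [L.OrderedStructure M] {k : ℕ} {c : Fin k → M} {a₀ : M}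
  {θ : L.Formula (Fin k ⊕ Fin 1)} {R ψ₀ : L.Formula (Fin k ⊕ Fin 2)}

noncomputable def leastCRFCandidate (R ψ₀ : L.Formula (Fin k ⊕ Fin 2))
    (θ : L.Formula (Fin k ⊕ Fin 1)) : L.Formula (Fin k ⊕ Fin 2) :=
  leVar 1 0 ⊓ exCons (R.relabel (Sum.map id ![0, 2]) ⊓ θ.relabel (Sum.map id fun _ => 0) ⊓
    ψ₀.relabel (Sum.map id ![0, 2]) ⊓ leVar 1 0)

lemma real2_leastCRFCandidate {R ψ₀ : L.Formula (Fin k ⊕ Fin 2)} {x y : M} :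
    real2 L c (leastCRFCandidate R ψ₀ θ) x y ↔ y ≤ x ∧ ∃ w,
      (real2 L c R w y ∧ θ.Realize (Sum.elim c fun _ => w) ∧ real2 L c ψ₀ w y) ∧ x ≤ w := by
  have : ∀ w, (Fin.cons w ![x, y] : Fin 3 → M) ∘ ![0, 2] = ![w, y] := fun w => by
    ext i; fin_cases i <;> rfl
  simp only [real2, leastCRFCandidate, Formula.realize_inf, realize_leVar, realize_exCons,
    realize_relabel_sumMap, this, and_assoc]
  rfl

lemma IsKernelFormula.real2_of_le (hMsat : OmegaSaturated L M) (hR : IsKernelFormula L c a₀ R)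
    {α w : M} (hα : α ∈ pSet L c a₀) (hw : w ∈ pSet L c a₀) (hRw : real2 L c R w α)
    (hαw : α ≤ w) {φ : L.Formula (Fin k ⊕ Fin 2)} (hφ : φ ∈ CRF L c a₀) : real2 L c φ w α := by
  rcases hR α hα w hw hRw φ hφ with h | h
  · exact h
  · obtain ⟨hself, hle⟩ := hφ.2.mem_self_and_le hMsat hw
    obtain rfl := le_antisymm (hle α h) hαw
    exact hself

lemma mem_pSet_of_real2 (hMsat : OmegaSaturated L M) (hθ : ThetaWitness L c a₀ θ)
    (hψ₀ : ψ₀ ∈ CRF L c a₀) {α w : M} (hα : α ∈ pSet L c a₀) (hw : real2 L c ψ₀ w α)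
    (hθw : θ.Realize (Sum.elim c fun _ => w)) : w ∈ pSet L c a₀ := by
  obtain ⟨_, _, γ₂, hγ₂, hbd⟩ := hψ₀.1.exists_bounds hMsat hα
  exact mem_pSet_of_le_of_le hθ hα hγ₂ ((hψ₀.2.mem_self_and_le hMsat hα).2 w hw)
    (hbd w hw).2.le hθw

lemma real2_of_real2_leastCRFCandidate (hMsat : OmegaSaturated L M)
    (hθ : ThetaWitness L c a₀ θ) (hψ₀ : ψ₀ ∈ CRF L c a₀) (hR : IsKernelFormula L c a₀ R)
    {α x : M} (hα : α ∈ pSet L c a₀) (hx : real2 L c (leastCRFCandidate R ψ₀ θ) x α)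
    {φ : L.Formula (Fin k ⊕ Fin 2)} (hφ : φ ∈ CRF L c a₀) : real2 L c φ x α := by
  obtain ⟨hαx, w, ⟨hRw, hθw, hψ₀w⟩, hxw⟩ := real2_leastCRFCandidate.1 hx
  have hw := mem_pSet_of_real2 hMsat hθ hψ₀ hα hψ₀w hθw
  have hφw := hR.real2_of_le hMsat hα hw hRw (hαx.trans hxw) hφ
  have hφα := (hφ.2.mem_self_and_le hMsat hα).1
  exact ((hφ.2.convexIn hMsat hα) α ⟨hα, hφα⟩ w ⟨hw, hφw⟩ x trivial hαx hxw).2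

lemma leastCRFCandidate_mem_CRF (hMsat : OmegaSaturated L M) (hθ : ThetaWitness L c a₀ θ)
    (hψ₀ : ψ₀ ∈ CRF L c a₀) (hR : IsKernelFormula L c a₀ R) {α w : M}
    (hα : α ∈ pSet L c a₀) (hw : w ∈ pSet L c a₀) (hαw : α < w) (hRw : real2 L c R w α) :
    leastCRFCandidate R ψ₀ θ ∈ CRF L c a₀ := by
  have hω : real2 L c R w α ∧ θ.Realize (Sum.elim c fun _ => w) ∧ real2 L c ψ₀ w α :=
    ⟨hRw, realize_of_mem_pSet hθ hw, hR.real2_of_le hMsat hα hw hRw hαw.le hψ₀⟩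
  have hwφ : real2 L c (leastCRFCandidate R ψ₀ θ) w α :=
    real2_leastCRFCandidate.2 ⟨hαw.le, w, hω, le_rfl⟩
  obtain ⟨γ₁, hγ₁, γ₂, hγ₂, hbd⟩ := hψ₀.1.exists_bounds hMsat hα
  refine ⟨⟨α, hα, γ₁, hγ₁, γ₂, hγ₂, ⟨w, hw, hwφ, hαw.ne'⟩, fun z hz => ?_⟩,
    ⟨α, hα, ?_, real2_leastCRFCandidate.2 ⟨le_rfl, w, hω, hαw.le⟩,
      fun z hz => (real2_leastCRFCandidate.1 hz).1⟩⟩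
  · obtain ⟨hαz, w', ⟨-, -, hw'⟩, hzw'⟩ := real2_leastCRFCandidate.1 hz
    exact ⟨(hbd α (hψ₀.2.mem_self_and_le hMsat hα).1).1.trans_le hαz,
      hzw'.trans_lt (hbd w' hw').2⟩
  · rintro a ⟨ha, haφ⟩ b ⟨hb, hbφ⟩ u - hau hub
    obtain ⟨hαa, -⟩ := real2_leastCRFCandidate.1 haφ
    obtain ⟨-, w', hw', hbw'⟩ := real2_leastCRFCandidate.1 hbφ
    have hu := hψ₀.2.convexIn hMsat hα
      a ⟨ha, real2_of_real2_leastCRFCandidate hMsat hθ hψ₀ hR hα haφ hψ₀⟩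
      b ⟨hb, real2_of_real2_leastCRFCandidate hMsat hθ hψ₀ hR hα hbφ hψ₀⟩ u trivial hau hub
    exact ⟨hu.1, real2_leastCRFCandidate.2 ⟨hαa.trans hau, w', hw', hub.trans hbw'⟩⟩

theorem hasLeastCRF_of_isKernelFormula (hMsat : OmegaSaturated L M)
    (hθ : ThetaWitness L c a₀ θ) (hψ₀ : ψ₀ ∈ CRF L c a₀) (hR : IsKernelFormula L c a₀ R)
    {α w : M} (hα : α ∈ pSet L c a₀) (hw : w ∈ pSet L c a₀) (hαw : α < w)
    (hRw : real2 L c R w α) : HasLeastCRF L c a₀ :=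
  ⟨_, leastCRFCandidate_mem_CRF hMsat hθ hψ₀ hR hα hw hαw hRw, fun _ hφ _ hα _ hx =>
    ⟨real2_of_real2_leastCRFCandidate hMsat hθ hψ₀ hR hα hx.1 hφ, hx.2⟩⟩

end Kernel

section Isolation

variable {L : FirstOrder.Language.{u, v}} {M : Type w} [L.Structure M] {k : ℕ}
  {c : Fin k → M} {α₁ α₂ : M}

lemma IsPrincipal1.exists_isolating_formula (h : IsPrincipal1 L (Sum.elim c fun _ : Fin 1 => α₁) α₂) :
    ∃ R : L.Formula (Fin k ⊕ Fin 2), real2 L c R α₂ α₁ ∧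
      ∀ z, real2 L c R z α₁ → tpT L c ![z, α₁] = tpT L c ![α₂, α₁] := by
  obtain ⟨χ, hχ, hiso⟩ := h
  let e : (Fin k ⊕ Fin 1) ⊕ Fin 1 → Fin k ⊕ Fin 2 :=
    Sum.elim (Sum.elim Sum.inl fun _ => Sum.inr 1) fun _ => Sum.inr 0
  let e' : Fin k ⊕ Fin 2 → (Fin k ⊕ Fin 1) ⊕ Fin 1 :=
    Sum.elim (Sum.inl ∘ Sum.inl) ![Sum.inr 0, Sum.inl (Sum.inr 0)]
  have hin : ∀ z, Sum.elim c ![z, α₁] ∘ e = Sum.elim (Sum.elim c fun _ => α₁) fun _ => z := by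
    intro z
    ext ((i | i) | i) <;> rfl
  have hout : ∀ z, Sum.elim (Sum.elim c fun _ => α₁) (fun _ => z) ∘ e' = Sum.elim c ![z, α₁] := by
    intro z
    ext (i | i)
    · rfl
    · fin_cases i <;> rfl
  refine ⟨χ.relabel e, ?_, fun z hz => ?_⟩
  · rwa [real2, Formula.realize_relabel, hin]
  · rw [real2, Formula.realize_relabel, hin] at hz
    ext φ
    simpa only [tp1, tpT, Set.mem_ofPred_eq, Formula.realize_relabel, hout] using
      Set.ext_iff.1 (hiso z hz) (φ.relabel e')

lemma isKernelFormula_of_isolating [LinearOrder M] (hMsat : OmegaSaturated L M) {a₀ : M}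
    {θ : L.Formula (Fin k ⊕ Fin 1)} (h₁ : α₁ ∈ pSet L c a₀) (hker : α₂ ∈ KerSet L c a₀ θ α₁)
    {R : L.Formula (Fin k ⊕ Fin 2)}
    (hR : ∀ z, real2 L c R z α₁ → tpT L c ![z, α₁] = tpT L c ![α₂, α₁]) :
    IsKernelFormula L c a₀ R := by
  intro β hβ z _ hz φ hφ
  obtain ⟨z', h⟩ := exists_tpT_cons_eq hMsat (tpT_eq_of_mem_pSet hβ h₁) z
  have h' := h.trans (hR z' ((real2_iff_of_tpT_eq h R 0 1).1 hz))
  exact (mem_iInter₂.1 hker φ hφ).1.symm.imp (real2_iff_of_tpT_eq h' φ 0 1).2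
    (real2_iff_of_tpT_eq h' φ 1 0).2

end Isolation

theorem statement_15_general {L : FirstOrder.Language.{u, v}} [IsOrdered L]
    {M : Type w} [L.Structure M] [LinearOrder M] [L.OrderedStructure M]
    (hMsat : OmegaSaturated L M)
    {k : ℕ} (c : Fin k → M) (a₀ : M)
    (hinf : CRFInfinite L c a₀)
    (hnl : ¬ HasLeastCRF L c a₀)
    (θ : L.Formula (Fin k ⊕ Fin 1)) (hθ : ThetaWitness L c a₀ θ)
    (α₁ α₂ : M) (h₁ : α₁ ∈ pSet L c a₀) (h₂ : α₂ ∈ pSet L c a₀)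
    (hne : α₁ ≠ α₂) (hker : α₂ ∈ KerSet L c a₀ θ α₁) :
    ¬ IsPrincipal1 L (Sum.elim c fun _ : Fin 1 => α₁) α₂ := by
  intro hpr
  obtain ⟨R, hR, hRiso⟩ := hpr.exists_isolating_formula
  obtain ⟨_, ψ₀, hψ₀, -⟩ := hinf.nonempty
  have hK := isKernelFormula_of_isolating hMsat h₁ hker hRiso
  rcases hne.lt_or_gt with hlt | hgt
  · exact hnl (hasLeastCRF_of_isKernelFormula hMsat hθ hψ₀ hK h₁ h₂ hlt hR)
  · exact hnl (hasLeastCRF_of_isKernelFormula hMsat hθ hψ₀ hK.swapVars h₂ h₁ hgt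
      (real2_swapVars.2 hR))

/-- Lemma 9. Under the hypotheses of Theorem 7 (with `T` small), if
`α₁ ≠ α₂` are realizations of `p` with `α₂ ∈ Ker_{p(M)}(α₁)`, then `tp(α₂/α₁)` is
non-principal. -/
theorem statement_15 {L : FirstOrder.Language.{u, v}} [IsOrdered L]
    (hL : Countable L.Symbols)
    {M : Type w} [L.Structure M] [LinearOrder M] [L.OrderedStructure M] [Nonempty M]
    (hMc : Countable M) (hMsat : OmegaSaturated L M)
    (hsmall : IsSmall L (L.completeTheory M))
    (hRestr : SatisfiesRestriction L M)
    {k : ℕ} (c : Fin k → M) (a₀ : M)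
    (hnonalg : (pSet L c a₀).Infinite)
    (hinf : CRFInfinite L c a₀)
    (hnl : ¬ HasLeastCRF L c a₀)
    (θ : L.Formula (Fin k ⊕ Fin 1)) (hθ : ThetaWitness L c a₀ θ)
    (α₁ α₂ : M) (h₁ : α₁ ∈ pSet L c a₀) (h₂ : α₂ ∈ pSet L c a₀)
    (hne : α₁ ≠ α₂) (hker : α₂ ∈ KerSet L c a₀ θ α₁) :
    ¬ IsPrincipal1 L (Sum.elim c fun _ : Fin 1 => α₁) α₂ :=
  statement_15_general hMsat c a₀ hinf hnl θ hθ α₁ α₂ h₁ h₂ hne hker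

end Paper
end
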